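/- arXiv:1012.1427 — 4 statements merged into one kernel-verified Lean document; each statement's English description precedes it below -/
import Mathlib

section
/- Let d ≥ 1 and K1 > 0, and set δ := (2d+1)^{−2}. There exists a constant C, depending only on d and K1, such that the following holds for every integer L ≥ 2 and every real M ≥ 2. Let j_0, …, j_L ∈ ℤ^d satisfy |j_{q+1} − j_q| ≤ M for all 0 ≤ q < L (sup-norm on ℤ^d) and |‖j_q‖² − ‖j_{q'}‖²| ≤ K1 M |q − q'| for all 0 ≤ q, q' ≤ L, where ‖j‖² := j_1² + … + j_d². Let G := span_ℝ{ j_q − j_0 : 0 ≤ q ≤ L } ⊆ ℝ^d, and assume that for every q0 ∈ {0, …, L}, span_ℝ{ j_q − j_{q0} : 0 ≤ q ≤ L, |q − q0| ≤ L^δ } = G. Then the number of distinct points among j_0, …, j_L is at most C (M L^δ)^{(2d+1)d}. -/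
open scoped BigOperators

namespace Stmt12

/-- sup-norm of an integer vector -/
def znorm {n : ℕ} (l : Fin n → ℤ) : ℕ := Finset.univ.sup fun t => (l t).natAbs

/-- the real vector `j_q − j_{q0}` (coordinate-wise cast of integers) -/
def diffR {d : ℕ} (x y : Fin d → ℤ) : Fin d → ℝ := fun t => ((x t - y t : ℤ) : ℝ)

/-- auxiliary: the linear functional `u ↦ ∑ t, w t * u t` -/
def dotL {d : ℕ} (w : Fin d → ℝ) : (Fin d → ℝ) →ₗ[ℝ] ℝ where
  toFun u := ∑ t, w t * u t
  map_add' u v := by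
    simp only [Pi.add_apply, mul_add, Finset.sum_add_distrib]
  map_smul' c u := by
    simp only [Pi.smul_apply, smul_eq_mul, RingHom.id_apply, Finset.mul_sum]
    exact Finset.sum_congr rfl fun t _ => by ring

lemma aux_step (d L : ℕ) (M : ℝ) (hM0 : 0 < M) (j : Fin (L + 1) → (Fin d → ℤ))
    (hchain : ∀ q : Fin L, (znorm (j q.succ - j q.castSucc) : ℝ) ≤ M) :
    ∀ (a b : Fin (L+1)) (t : Fin d),
      |((j a t - j b t : ℤ) : ℝ)| ≤ M * |((a:ℤ)) - ((b:ℤ))| := by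
  have key : ∀ (n : ℕ) (a b : Fin (L+1)), (a:ℕ) = (b:ℕ) + n → ∀ t,
      |((j a t - j b t : ℤ) : ℝ)| ≤ M * n := by
    intro n
    induction n with
    | zero =>
      intro a b hab t
      have : a = b := Fin.ext (by omega)
      simp [this]
    | succ n ih =>
      intro a b hab t
      have hbnL : (b:ℕ) + n < L := by omega
      set c : Fin (L+1) := ⟨(b:ℕ) + n, by omega⟩ with hc
      have h1 := ih c b rfl t
      -- step from c to a
      set q : Fin L := ⟨(b:ℕ) + n, hbnL⟩ with hq
      have hqc : q.castSucc = c := rfl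
      have hqs : q.succ = a := Fin.ext (by simp [Fin.val_succ, hq]; omega)
      have h2 : |((j a t - j c t : ℤ) : ℝ)| ≤ M := by
        have hle : (j a t - j c t).natAbs ≤ znorm (j q.succ - j q.castSucc) := by
          rw [hqc, hqs]
          simpa [Pi.sub_apply, znorm] using
            Finset.le_sup (f := fun t => ((j a - j c) t).natAbs) (Finset.mem_univ t)
        have := (hchain q).trans_eq' (by exact_mod_cast rfl)
        calc |((j a t - j c t : ℤ) : ℝ)| = ((j a t - j c t).natAbs : ℝ) := by
              rw [Nat.cast_natAbs]; push_cast; ring_nf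
          _ ≤ (znorm (j q.succ - j q.castSucc) : ℝ) := by exact_mod_cast hle
          _ ≤ M := hchain q
      calc |((j a t - j b t : ℤ) : ℝ)|
          = |(((j a t - j c t) + (j c t - j b t) : ℤ) : ℝ)| := by ring_nf
        _ ≤ |((j a t - j c t : ℤ) : ℝ)| + |((j c t - j b t : ℤ) : ℝ)| := by
            push_cast; exact abs_add_le _ _
        _ ≤ M + M * n := add_le_add h2 h1
        _ = M * (n + 1 : ℕ) := by push_cast; ring
  intro a b t
  rcases le_total (b:ℕ) (a:ℕ) with h | h
  · have := key ((a:ℕ) - (b:ℕ)) a b (by omega) t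
    calc |((j a t - j b t : ℤ) : ℝ)| ≤ M * (((a:ℕ) - (b:ℕ) : ℕ) : ℝ) := this
      _ = M * |((a:ℤ)) - ((b:ℤ))| := by
          congr 1
          have hz : (((a:ℕ) - (b:ℕ) : ℕ) : ℤ) = |((a:ℤ)) - ((b:ℤ))| := by
            rw [abs_of_nonneg (by omega)]; omega
          exact_mod_cast congrArg (fun z : ℤ => (z : ℝ)) hz
  · have := key ((b:ℕ) - (a:ℕ)) b a (by omega) t
    calc |((j a t - j b t : ℤ) : ℝ)|
        = |((j b t - j a t : ℤ) : ℝ)| := by push_cast; rw [abs_sub_comm]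
      _ ≤ M * (((b:ℕ) - (a:ℕ) : ℕ) : ℝ) := this
      _ = M * |((a:ℤ)) - ((b:ℤ))| := by
          congr 1
          have hz : (((b:ℕ) - (a:ℕ) : ℕ) : ℤ) = |((a:ℤ)) - ((b:ℤ))| := by
            rw [abs_of_nonpos (by omega)]; omega
          exact_mod_cast congrArg (fun z : ℤ => (z : ℝ)) hz

set_option maxHeartbeats 1600000 in
lemma aux_proj (d : ℕ) (hd : 1 ≤ d) (K1 : ℝ) (hK1 : 0 < K1) (L : ℕ) (hL : 2 ≤ L)
    (M : ℝ) (hM : 2 ≤ M) (j : Fin (L + 1) → (Fin d → ℤ))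
    (hsq : ∀ q q' : Fin (L + 1),
            |((∑ t, (j q t) ^ 2 : ℤ) : ℝ) - ((∑ t, (j q' t) ^ 2 : ℤ) : ℝ)|
              ≤ K1 * M * (|((q : ℤ)) - ((q' : ℤ))| : ℤ))
    (Λ : ℝ) (hΛ1 : (1:ℝ) ≤ Λ) (hM0 : (0:ℝ) < M)
    (hstep : ∀ (a b : Fin (L+1)) (t : Fin d),
      |((j a t - j b t : ℤ) : ℝ)| ≤ M * |((a:ℤ)) - ((b:ℤ))|)
    (G : Submodule ℝ (Fin d → ℝ))
    (hspan : ∀ (q0 : Fin (L + 1)),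
      Submodule.span ℝ {x : Fin d → ℝ | ∃ q : Fin (L + 1),
          (|((q : ℤ)) - ((q0 : ℤ))| : ℝ) ≤ Λ ∧ x = diffR (j q) (j q0)} = G)
    (P : ℝ) (hPdef : P = M * Λ) (hP1 : (1:ℝ) ≤ P) (hP0 : (0:ℝ) < P)
    (X : ℝ) (hX : X = (d.factorial : ℝ) * ((K1 + (d:ℝ))^d * P^(2*d)))
    (R0 : ℝ) (hR0 : R0 = (d:ℝ) * X * P) :
    ∀ q0 : Fin (L+1), ∃ p : Fin d → ℝ,
      (∀ t, |p t| ≤ R0) ∧ ∀ u ∈ G, ∑ t, p t * u t = ∑ t, ((j q0 t : ℤ) : ℝ) * u t := by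
  classical
  intro q0
  set S : Set (Fin d → ℝ) := {x : Fin d → ℝ | ∃ q : Fin (L + 1),
      (|((q : ℤ)) - ((q0 : ℤ))| : ℝ) ≤ Λ ∧ x = diffR (j q) (j q0)} with hS
  obtain ⟨s, hsS, hspan_s, hli⟩ := exists_linearIndependent ℝ S
  have hfin : s.Finite := hli.set_finite_of_isNoetherian
  haveI : Fintype s := hfin.fintype
  -- choose indices
  choose qf habs hval using fun i : s => (hsS i.2 : (i : Fin d → ℝ) ∈ S)
  set f : s → (Fin d → ℝ) := fun i => (i : Fin d → ℝ) with hf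
  have hfval : ∀ (i : s) (t : Fin d), f i t = ((j (qf i) t - j q0 t : ℤ) : ℝ) := by
    intro i t
    simpa [diffR] using congrFun (hval i) t
  -- coordinate bound on f
  have hfb : ∀ (i : s) (t : Fin d), |f i t| ≤ P := by
    intro i t
    rw [hfval i t, hPdef]
    calc |((j (qf i) t - j q0 t : ℤ) : ℝ)| ≤ M * |((qf i : ℤ)) - ((q0 : ℤ))| := hstep _ _ t
      _ ≤ M * Λ := by
          apply mul_le_mul_of_nonneg_left _ hM0.le
          rw [Int.cast_abs]; push_cast
          exact habs i
  -- cardinality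
  have hcard : Fintype.card s ≤ d := by
    have := hli.fintype_card_le_finrank
    rwa [Module.finrank_fin_fun] at this
  -- Gram matrix
  set Az : Matrix s s ℤ := fun i k => ∑ t, (j (qf i) t - j q0 t) * (j (qf k) t - j q0 t) with hAz
  set A : Matrix s s ℝ := fun i k => ∑ t, f i t * f k t with hA
  have hAcast : A = Az.map (Int.cast : ℤ → ℝ) := by
    ext i k
    simp only [hA, Matrix.map_apply, hAz]
    show ∑ t, f i t * f k t = ((∑ t, (j (qf i) t - j q0 t) * (j (qf k) t - j q0 t) : ℤ) : ℝ)
    push_cast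
    exact Finset.sum_congr rfl fun t _ => by rw [hfval i t, hfval k t]; push_cast; ring
  have hAsymm : ∀ i k, A i k = A k i := by
    intro i k; simp only [hA]; exact Finset.sum_congr rfl fun t _ => mul_comm _ _
  -- Gram determinant nonzero
  have hdet : A.det ≠ 0 := by
    intro h0
    obtain ⟨v, hv0, hv⟩ := Matrix.exists_mulVec_eq_zero_iff.mpr h0
    have hquad : ∑ t, (∑ i, v i * f i t)^2 = 0 := by
      have h1 : ∀ k, ∑ i, A k i * v i = 0 := fun k => congrFun hv k
      calc ∑ t, (∑ i, v i * f i t)^2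
          = ∑ t, ∑ k, ∑ i, (v k * f k t) * (v i * f i t) := by
            apply Finset.sum_congr rfl; intro t _; rw [sq, Finset.sum_mul_sum]
        _ = ∑ k, v k * (∑ i, A k i * v i) := by
            rw [Finset.sum_comm]
            apply Finset.sum_congr rfl; intro k _
            rw [Finset.mul_sum, Finset.sum_comm]
            apply Finset.sum_congr rfl; intro i _
            simp only [hA, Finset.sum_mul, Finset.mul_sum]
            apply Finset.sum_congr rfl; intro t _; ring
        _ = 0 := by simp [h1]
    have hzero : ∀ t, ∑ i, v i * f i t = 0 := by
      intro t
      have hnn : ∀ t ∈ Finset.univ, (0:ℝ) ≤ (∑ i, v i * f i t)^2 := fun t _ => sq_nonneg _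
      have := (Finset.sum_eq_zero_iff_of_nonneg hnn).mp hquad t (Finset.mem_univ t)
      exact pow_eq_zero_iff (by norm_num) |>.mp this
    have : ∑ i, v i • f i = 0 := by
      funext t
      simpa [Finset.sum_apply] using hzero t
    have hv0' := Fintype.linearIndependent_iff.mp hli v (by simpa [f] using this)
    exact hv0 (funext hv0')
  -- determinant at least 1
  have hcastdet : A.det = ((Az.det : ℤ) : ℝ) := by
    rw [hAcast]; exact ((Int.castRingHom ℝ).map_det Az).symm
  have hAz0 : Az.det ≠ 0 := by
    intro h; exact hdet (by rw [hcastdet, h, Int.cast_zero])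
  have hdet1 : (1:ℝ) ≤ |A.det| := by
    rw [hcastdet, ← Int.cast_abs]
    exact_mod_cast Int.one_le_abs hAz0
  -- the RHS vector
  set b : s → ℝ := fun k => ∑ t, ((j q0 t : ℤ) : ℝ) * f k t with hbdef
  have hd' : (1:ℝ) ≤ (d:ℝ) := by exact_mod_cast hd
  have hβ1 : (1:ℝ) ≤ (K1 + (d:ℝ)) * P^2 := by nlinarith
  have hbb : ∀ k, |b k| ≤ (K1 + (d:ℝ)) * P^2 := by
    intro k
    have hid : ∀ t : Fin d, (j (qf k) t)^2 - (j q0 t)^2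
        = (j (qf k) t - j q0 t)^2 + 2*(j q0 t * (j (qf k) t - j q0 t)) := fun t => by ring
    have h2b : 2 * b k = (((∑ t, (j (qf k) t)^2 : ℤ) : ℝ) - ((∑ t, (j q0 t)^2 : ℤ) : ℝ))
        - ∑ t, (f k t)^2 := by
      have : ((∑ t, ((j (qf k) t)^2 - (j q0 t)^2) : ℤ) : ℝ)
          = ∑ t, (f k t)^2 + 2 * b k := by
        calc ((∑ t, ((j (qf k) t)^2 - (j q0 t)^2) : ℤ) : ℝ)
            = ∑ t, (((j (qf k) t)^2 - (j q0 t)^2 : ℤ) : ℝ) := by push_cast; rfl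
          _ = ∑ t, ((f k t)^2 + 2 * (((j q0 t : ℤ) : ℝ) * f k t)) := by
              apply Finset.sum_congr rfl; intro t _
              rw [hfval k t]; push_cast; ring
          _ = ∑ t, (f k t)^2 + 2 * b k := by
              rw [Finset.sum_add_distrib]
              congr 1
              exact (Finset.mul_sum _ _ _).symm
      rw [Finset.sum_sub_distrib] at this
      push_cast at this ⊢
      linarith
    have hsqd : |((∑ t, (j (qf k) t)^2 : ℤ) : ℝ) - ((∑ t, (j q0 t)^2 : ℤ) : ℝ)| ≤ K1 * P := by
      calc _ ≤ K1 * M * ((|((qf k : ℤ)) - ((q0 : ℤ))| : ℤ) : ℝ) := hsq (qf k) q0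
        _ ≤ K1 * M * Λ := by
            apply mul_le_mul_of_nonneg_left _ (by positivity)
            rw [Int.cast_abs]; push_cast; exact habs k
        _ = K1 * P := by rw [hPdef]; ring
    have hfsq : |∑ t, (f k t)^2| ≤ (d:ℝ) * P^2 := by
      calc |∑ t, (f k t)^2| ≤ ∑ t : Fin d, |(f k t)^2| := Finset.abs_sum_le_sum_abs _ _
        _ ≤ ∑ _t : Fin d, P^2 := by
            apply Finset.sum_le_sum; intro t _
            rw [abs_pow]
            exact pow_le_pow_left₀ (abs_nonneg _) (hfb k t) 2
        _ = (d:ℝ) * P^2 := by simp [Finset.sum_const, mul_comm]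
    have h1 : |2 * b k| ≤ K1 * P + (d:ℝ) * P^2 := by
      rw [h2b]; exact (abs_sub _ _).trans (add_le_add hsqd hfsq)
    rw [abs_mul, abs_two] at h1
    have hPP : P ≤ P^2 := by nlinarith
    nlinarith [abs_nonneg (b k), mul_le_mul_of_nonneg_left hPP hK1.le]
  have hAb : ∀ i k, |A i k| ≤ (K1 + (d:ℝ)) * P^2 := by
    intro i k
    have : |A i k| ≤ (d:ℝ) * P^2 := by
      calc |A i k| ≤ ∑ t : Fin d, |f i t * f k t| := Finset.abs_sum_le_sum_abs _ _
        _ ≤ ∑ _t : Fin d, P * P := by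
            apply Finset.sum_le_sum; intro t _
            rw [abs_mul]
            exact mul_le_mul (hfb i t) (hfb k t) (abs_nonneg _) (by linarith)
        _ = (d:ℝ) * P^2 := by simp [Finset.sum_const, mul_comm, sq]
    nlinarith
  -- solve the linear system
  have hunit : IsUnit A.det := isUnit_iff_ne_zero.mpr hdet
  set x : s → ℝ := A⁻¹.mulVec b with hx
  have hAx : A.mulVec x = b := by
    rw [hx, Matrix.mulVec_mulVec, Matrix.mul_nonsing_inv _ hunit, Matrix.one_mulVec]
  have hcramer : Matrix.cramer A b = A.det • x := by
    calc Matrix.cramer A b = A.adjugate.mulVec b := Matrix.cramer_eq_adjugate_mulVec A b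
      _ = A.adjugate.mulVec (A.mulVec x) := by rw [hAx]
      _ = (A.adjugate * A).mulVec x := by rw [Matrix.mulVec_mulVec]
      _ = (A.det • (1 : Matrix s s ℝ)).mulVec x := by rw [Matrix.adjugate_mul]
      _ = A.det • x := by rw [Matrix.smul_mulVec, Matrix.one_mulVec]
  -- bound on solution coefficients via Cramer
  have hxb : ∀ i, |x i| ≤ X := by
    intro i
    have hent : ∀ r c, |(A.updateCol i b) r c| ≤ (K1 + (d:ℝ)) * P^2 := by
      intro r c
      rw [Matrix.updateCol_apply]
      split_ifs
      · exact hbb r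
      · exact hAb r c
    have hcr : |Matrix.cramer A b i| ≤
        ((Fintype.card s).factorial : ℝ) * ((K1 + (d:ℝ)) * P^2) ^ (Fintype.card s) := by
      rw [Matrix.cramer_apply]
      have := Matrix.det_le (A := A.updateCol i b) (abv := AbsoluteValue.abs)
        (x := (K1 + (d:ℝ)) * P^2) (fun r c => hent r c)
      simpa [nsmul_eq_mul] using this
    have hcrX : |Matrix.cramer A b i| ≤ X := by
      refine hcr.trans ?_
      rw [hX]
      have h1 : ((Fintype.card s).factorial : ℝ) ≤ (d.factorial : ℝ) := by
        exact_mod_cast Nat.factorial_le hcard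
      have h2 : ((K1 + (d:ℝ)) * P^2) ^ (Fintype.card s) ≤ ((K1 + (d:ℝ)) * P^2) ^ d :=
        pow_le_pow_right₀ hβ1 hcard
      have h3 : ((K1 + (d:ℝ)) * P^2) ^ d = (K1 + (d:ℝ))^d * P^(2*d) := by
        rw [mul_pow, ← pow_mul]
      calc ((Fintype.card s).factorial : ℝ) * ((K1 + (d:ℝ)) * P^2) ^ (Fintype.card s)
          ≤ (d.factorial : ℝ) * ((K1 + (d:ℝ)) * P^2) ^ d := by
            apply mul_le_mul h1 h2 (by positivity) (by positivity)
        _ = (d.factorial : ℝ) * ((K1 + (d:ℝ))^d * P^(2*d)) := by rw [h3]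
    have hcx : Matrix.cramer A b i = A.det * x i := by
      have h := congrFun hcramer i
      rwa [Pi.smul_apply, smul_eq_mul] at h
    have hfin2 : |A.det| * |x i| ≤ X := by rw [← abs_mul, ← hcx]; exact hcrX
    calc |x i| = 1 * |x i| := (one_mul _).symm
      _ ≤ |A.det| * |x i| := mul_le_mul_of_nonneg_right hdet1 (abs_nonneg _)
      _ ≤ X := hfin2
  -- the vector p
  set p : Fin d → ℝ := fun t => ∑ i, x i * f i t with hp
  have hXnn : (0:ℝ) ≤ X := by rw [hX]; positivity
  have hpb : ∀ t, |p t| ≤ R0 := by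
    intro t
    calc |p t| ≤ ∑ i, |x i * f i t| := Finset.abs_sum_le_sum_abs _ _
      _ ≤ ∑ _i : s, X * P := by
          apply Finset.sum_le_sum; intro i _
          rw [abs_mul]; exact mul_le_mul (hxb i) (hfb i t) (abs_nonneg _) hXnn
      _ = (Fintype.card s : ℝ) * (X * P) := by
          simp [Finset.sum_const, Finset.card_univ, nsmul_eq_mul]
      _ ≤ (d:ℝ) * (X * P) := by
          apply mul_le_mul_of_nonneg_right _ (by positivity)
          exact_mod_cast hcard
      _ = R0 := by rw [hR0]; ring
  refine ⟨p, hpb, ?_⟩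
  -- p has the same dot products as j q0 against all of G
  have hGs : G = Submodule.span ℝ s := by rw [hspan_s]; exact (hspan q0).symm
  set w : Fin d → ℝ := fun t => p t - ((j q0 t : ℤ) : ℝ) with hw
  have hker : G ≤ LinearMap.ker (dotL w) := by
    rw [hGs, Submodule.span_le]
    intro y hy
    set i : s := ⟨y, hy⟩ with hi
    have h1 : ∑ t, p t * f i t = b i := by
      have e1 : ∑ t, p t * f i t = ∑ t, ∑ k, x k * f k t * f i t := by
        apply Finset.sum_congr rfl; intro t _
        exact Finset.sum_mul _ _ _
      have e2 : ∀ k, ∑ t, x k * f k t * f i t = A i k * x k := by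
        intro k
        rw [show A i k = ∑ t, f i t * f k t from rfl, Finset.sum_mul]
        apply Finset.sum_congr rfl; intro t _; ring
      rw [e1, Finset.sum_comm]
      rw [Finset.sum_congr rfl fun k _ => e2 k]
      have := congrFun hAx i
      simpa [Matrix.mulVec, dotProduct] using this
    have h2 : ∑ t, ((j q0 t : ℤ) : ℝ) * f i t = b i := rfl
    rw [SetLike.mem_coe, LinearMap.mem_ker]
    show ∑ t, w t * y t = 0
    have hyf : ∀ t, y t = f i t := fun t => rfl
    calc ∑ t, w t * y t = ∑ t, (p t * f i t - ((j q0 t : ℤ) : ℝ) * f i t) := by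
          apply Finset.sum_congr rfl; intro t _
          rw [hyf t, hw]; ring
      _ = (∑ t, p t * f i t) - ∑ t, ((j q0 t : ℤ) : ℝ) * f i t := Finset.sum_sub_distrib _ _
      _ = 0 := by rw [h1, h2, sub_self]
  intro u hu
  have h0 : ∑ t, w t * u t = 0 := hker hu
  have hexp : ∑ t, w t * u t = (∑ t, p t * u t) - ∑ t, ((j q0 t : ℤ) : ℝ) * u t := by
    rw [← Finset.sum_sub_distrib]
    apply Finset.sum_congr rfl; intro t _; rw [hw]; ring
  rw [hexp] at h0
  linarith



lemma count_box (d L : ℕ) (j : Fin (L+1) → (Fin d → ℤ)) (R : ℝ) (hR1 : 1 ≤ R)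
    (hcoord : ∀ q t, |((j q t - j 0 t : ℤ) : ℝ)| ≤ R) :
    ((Finset.univ.image j).card : ℝ) ≤ (3*R)^d := by
  classical
  set N : ℤ := ⌊R⌋ with hN
  have hN0 : 0 ≤ N := Int.le_floor.mpr (by norm_num; linarith)
  have hmem : ∀ q, j q ∈ Fintype.piFinset (fun t => Finset.Icc (j 0 t - N) (j 0 t + N)) := by
    intro q
    rw [Fintype.mem_piFinset]
    intro t
    have h := hcoord q t
    rw [← Int.cast_abs] at h
    have h2 : |j q t - j 0 t| ≤ N := Int.le_floor.mpr h
    rw [Finset.mem_Icc]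
    have := abs_le.mp h2
    omega
  have hsub : Finset.univ.image j ⊆ Fintype.piFinset (fun t => Finset.Icc (j 0 t - N) (j 0 t + N)) := by
    intro y hy
    obtain ⟨q, _, rfl⟩ := Finset.mem_image.mp hy
    exact hmem q
  have hcard := Finset.card_le_card hsub
  have hcardbox : (Fintype.piFinset (fun t => Finset.Icc (j 0 t - N) (j 0 t + N))).card
      = ((2*N+1).toNat)^d := by
    rw [Fintype.card_piFinset]
    have he : ∀ t, (Finset.Icc (j 0 t - N) (j 0 t + N)).card = (2*N+1).toNat := by
      intro t; rw [Int.card_Icc]; congr 1; ring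
    rw [Finset.prod_congr rfl (fun t _ => he t)]
    simp [Finset.prod_const]
  have h3 : ((2*N+1).toNat : ℝ) ≤ 3*R := by
    have h1 : ((2*N+1).toNat : ℤ) = 2*N+1 := Int.toNat_of_nonneg (by omega)
    have h2 : (N:ℝ) ≤ R := Int.floor_le R
    calc ((2*N+1).toNat : ℝ) = ((2*N+1 : ℤ) : ℝ) := by exact_mod_cast congrArg (fun z : ℤ => (z:ℝ)) h1
      _ = 2*(N:ℝ)+1 := by push_cast; ring
      _ ≤ 3*R := by linarith
  calc ((Finset.univ.image j).card : ℝ)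
      ≤ ((((2*N+1).toNat)^d : ℕ) : ℝ) := by exact_mod_cast hcard.trans_eq hcardbox
    _ = (((2*N+1).toNat : ℝ))^d := by push_cast; rfl
    _ ≤ (3*R)^d := pow_le_pow_left₀ (by positivity) h3 d

lemma aux_coord (d L : ℕ) (j : Fin (L+1) → Fin d → ℤ) (G : Submodule ℝ (Fin d → ℝ))
    (R0 : ℝ) (hR0nn : (0:ℝ) ≤ R0) (hd1 : (1:ℝ) ≤ (d:ℝ))
    (hmem : ∀ q : Fin (L+1), (fun t => ((j q t - j 0 t : ℤ) : ℝ)) ∈ G)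
    (hproj : ∀ q0 : Fin (L+1), ∃ p : Fin d → ℝ,
      (∀ t, |p t| ≤ R0) ∧ ∀ u ∈ G, ∑ t, p t * u t = ∑ t, ((j q0 t : ℤ) : ℝ) * u t) :
    ∀ (q : Fin (L+1)) (t : Fin d), |((j q t - j 0 t : ℤ) : ℝ)| ≤ 2 * (d:ℝ) * R0 := by
  intro q t
  obtain ⟨pq, hpqb, hpq⟩ := hproj q
  obtain ⟨p0, hp0b, hp0⟩ := hproj 0
  set v : Fin d → ℝ := fun t => ((j q t - j 0 t : ℤ) : ℝ) with hv
  have hvG : v ∈ G := hmem q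
  have h1 := hpq v hvG
  have h2 := hp0 v hvG
  have hkey : ∑ s, v s * v s = ∑ s, (pq s - p0 s) * v s := by
    have e1 : ∑ s, (pq s - p0 s) * v s = (∑ s, pq s * v s) - ∑ s, p0 s * v s := by
      rw [← Finset.sum_sub_distrib]
      exact Finset.sum_congr rfl fun s _ => by ring
    rw [e1, h1, h2, ← Finset.sum_sub_distrib]
    apply Finset.sum_congr rfl; intro s _
    rw [hv]; push_cast; ring
  have hsum : ∑ s, v s * v s ≤ ∑ s : Fin d, (2*R0)^2 := by
    rw [hkey]
    have step1 : ∑ s, (pq s - p0 s) * v s ≤ ∑ s, ((pq s - p0 s)^2/2 + (v s * v s)/2) := by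
      apply Finset.sum_le_sum; intro s _
      nlinarith [sq_nonneg (pq s - p0 s - v s)]
    have step2 : ∀ s : Fin d, (pq s - p0 s)^2 ≤ (2*R0)^2 := by
      intro s
      have ha : |pq s - p0 s| ≤ 2*R0 := by
        calc |pq s - p0 s| ≤ |pq s| + |p0 s| := abs_sub _ _
          _ ≤ R0 + R0 := add_le_add (hpqb s) (hp0b s)
          _ = 2*R0 := by ring
      calc (pq s - p0 s)^2 = |pq s - p0 s|^2 := (sq_abs _).symm
        _ ≤ (2*R0)^2 := pow_le_pow_left₀ (abs_nonneg _) ha 2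
    have step3 : ∑ s, ((pq s - p0 s)^2/2 + (v s * v s)/2)
        ≤ (∑ s : Fin d, (2*R0)^2/2) + ∑ s, (v s * v s)/2 := by
      rw [Finset.sum_add_distrib]
      apply add_le_add_left
      apply Finset.sum_le_sum; intro s _
      linarith [step2 s]
    have step4 : ∑ s, (v s * v s)/2 = (∑ s, v s * v s)/2 := by
      rw [Finset.sum_div]
    have step5 : ∑ s : Fin d, (2*R0)^2/2 = (∑ s : Fin d, (2*R0)^2)/2 := by
      rw [Finset.sum_div]
    have := (hkey ▸ step1).trans (step3.trans_eq (by rw [step4, step5]))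
    linarith [this]
  have hsumR : ∑ s, v s * v s ≤ (d:ℝ) * (2*R0)^2 := by
    refine hsum.trans_eq ?_
    rw [Finset.sum_const]
    simp [nsmul_eq_mul]
  have hone : v t * v t ≤ (d:ℝ) * (2*R0)^2 := by
    refine le_trans ?_ hsumR
    exact Finset.single_le_sum (fun s _ => mul_self_nonneg (v s)) (Finset.mem_univ t)
  show |v t| ≤ 2 * (d:ℝ) * R0
  have hdnn : (0:ℝ) ≤ (d:ℝ) := le_trans zero_le_one hd1
  have h2d : (0:ℝ) ≤ 2*(d:ℝ)*R0 := by positivity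
  have hsq : |v t| * |v t| ≤ (2*(d:ℝ)*R0)*(2*(d:ℝ)*R0) := by
    rw [abs_mul_abs_self]
    nlinarith [hone, mul_nonneg (mul_nonneg (mul_self_nonneg R0) hdnn) (sub_nonneg.mpr hd1)]
  by_contra hcon
  push_neg at hcon
  have := mul_self_lt_mul_self h2d hcon
  linarith

/-- Case I of the proof of Lemma 5.4: counting the distinct spatial
components of a chain, under the non-degeneracy assumption that short sub-chains
span the full direction space `G`. Here `δ := (2d+1)^{-2}`. -/
theorem chain_spatial_counting
    (d : ℕ) (hd : 1 ≤ d) (K1 : ℝ) (hK1 : 0 < K1) :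
    ∃ C : ℝ, 0 < C ∧
      ∀ (L : ℕ), 2 ≤ L → ∀ M : ℝ, 2 ≤ M →
        ∀ j : Fin (L + 1) → (Fin d → ℤ),
          (∀ q : Fin L, (znorm (j q.succ - j q.castSucc) : ℝ) ≤ M) →
          (∀ q q' : Fin (L + 1),
            |((∑ t, (j q t) ^ 2 : ℤ) : ℝ) - ((∑ t, (j q' t) ^ 2 : ℤ) : ℝ)|
              ≤ K1 * M * (|((q : ℤ)) - ((q' : ℤ))| : ℤ)) →
          (∀ q0 : Fin (L + 1),
            Submodule.span ℝ {x : Fin d → ℝ | ∃ q : Fin (L + 1),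
                (|((q : ℤ)) - ((q0 : ℤ))| : ℝ) ≤ (L : ℝ) ^ ((((2 * d + 1) : ℝ) ^ 2)⁻¹) ∧
                x = diffR (j q) (j q0)}
              = Submodule.span ℝ {x : Fin d → ℝ | ∃ q : Fin (L + 1),
                x = diffR (j q) (j 0)}) →
          ((Finset.univ.image j).card : ℝ)
            ≤ C * (M * (L : ℝ) ^ ((((2 * d + 1) : ℝ) ^ 2)⁻¹)) ^ ((2 * d + 1) * d) := by
  classical
  refine ⟨(6 * (d:ℝ)^2 * (d.factorial : ℝ) * (K1 + (d:ℝ))^d)^d, by positivity, ?_⟩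
  intro L hL M hM j hchain hsq hspan
  set δr : ℝ := (((2 * d + 1) : ℝ) ^ 2)⁻¹ with hδr
  set Λ : ℝ := (L : ℝ) ^ δr with hΛ
  have hΛ1 : (1:ℝ) ≤ Λ := by
    apply Real.one_le_rpow (by exact_mod_cast Nat.one_le_iff_ne_zero.mpr (by omega))
    positivity
  have hM0 : (0:ℝ) < M := by linarith
  set P : ℝ := M * Λ with hP
  have hP2 : (2:ℝ) ≤ P := by nlinarith
  have hP1 : (1:ℝ) ≤ P := by linarith
  have hP0 : (0:ℝ) < P := by linarith
  have hstep := aux_step d L M hM0 j hchain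
  set G := Submodule.span ℝ {x : Fin d → ℝ | ∃ q : Fin (L + 1),
                x = diffR (j q) (j 0)} with hG
  set X : ℝ := (d.factorial : ℝ) * ((K1 + (d:ℝ))^d * P^(2*d)) with hX
  set R0 : ℝ := (d:ℝ) * X * P with hR0
  have hX1 : (1:ℝ) ≤ X := by
    have h1 : (1:ℝ) ≤ (d.factorial : ℝ) := by
      exact_mod_cast Nat.one_le_iff_ne_zero.mpr d.factorial_ne_zero
    have h2 : (1:ℝ) ≤ (K1 + (d:ℝ))^d := by
      apply one_le_pow₀; have : (1:ℝ) ≤ (d:ℝ) := by exact_mod_cast hd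
      linarith
    have h3 : (1:ℝ) ≤ P^(2*d) := one_le_pow₀ hP1
    calc (1:ℝ) = 1 * (1 * 1) := by ring
    _ ≤ (d.factorial : ℝ) * ((K1 + (d:ℝ))^d * P^(2*d)) :=
      mul_le_mul h1 (mul_le_mul h2 h3 one_pos.le (by linarith)) (by norm_num) (by positivity)
  have hd1 : (1:ℝ) ≤ (d:ℝ) := by exact_mod_cast hd
  have hR01 : (1:ℝ) ≤ R0 := by
    calc (1:ℝ) = 1 * 1 * 1 := by ring
    _ ≤ (d:ℝ) * X * P := by
      apply mul_le_mul (mul_le_mul hd1 hX1 one_pos.le (by linarith)) hP1 one_pos.le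
      positivity
  have hproj := aux_proj d hd K1 hK1 L hL M hM j hsq Λ hΛ1 hM0 hstep G hspan P hP hP1 hP0 X hX R0 hR0
  set R : ℝ := 2 * (d:ℝ) * R0 with hR
  have hR1 : (1:ℝ) ≤ R := by nlinarith
  have hR0nn : (0:ℝ) ≤ R0 := by linarith
  have hcoord : ∀ (q : Fin (L+1)) (t : Fin d), |((j q t - j 0 t : ℤ) : ℝ)| ≤ R := by
    rw [hR]
    apply aux_coord d L j G R0 hR0nn hd1 _ hproj
    intro q
    rw [hG]
    exact Submodule.subset_span ⟨q, rfl⟩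
  have hcount := count_box d L j R hR1 hcoord
  refine hcount.trans ?_
  have h3R : 3 * R = (6 * (d:ℝ)^2 * (d.factorial : ℝ) * (K1 + (d:ℝ))^d) * P^(2*d+1) := by
    rw [hR, hR0, hX, pow_succ]
    ring
  rw [h3R, mul_pow, ← pow_mul]

end Stmt12
end

section
/- Let D ≥ 1 be an integer, M ≥ 1 a real number and 𝓛 ≥ 1. Let E ⊆ ℤ^D be a set such that every finite sequence x_0, …, x_L of distinct points of E with |x_{q+1} − x_q| ≤ M for all 0 ≤ q < L (sup-norm on ℤ^D) satisfies L ≤ 𝓛. Then E admits a partition E = ⊔_α Ω_α into nonempty subsets such that diam(Ω_α) ≤ M𝓛 for every α, and d(Ω_α, Ω_β) > M for all α ≠ β, where diam(Ω) := sup_{x,y∈Ω}|x − y| and d(Ω, Ω') := inf_{x∈Ω, y∈Ω'}|x − y|. -/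
open scoped BigOperators

namespace Stmt13

/-- sup-norm of an integer vector -/
def znorm {n : ℕ} (l : Fin n → ℤ) : ℕ := Finset.univ.sup fun t => (l t).natAbs

lemma znorm_sub_comm {n : ℕ} (a b : Fin n → ℤ) : znorm (a - b) = znorm (b - a) := by
  unfold znorm
  congr 1
  funext t
  rw [Pi.sub_apply, Pi.sub_apply, ← Int.natAbs_neg, neg_sub]

lemma znorm_add_le {n : ℕ} (a b : Fin n → ℤ) : znorm (a + b) ≤ znorm a + znorm b := by
  refine Finset.sup_le fun t _ => ?_
  refine le_trans ?_ (add_le_add (Finset.le_sup (Finset.mem_univ t))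
    (Finset.le_sup (Finset.mem_univ t)))
  exact Int.natAbs_add_le (a t) (b t)

lemma znorm_self {n : ℕ} (a : Fin n → ℤ) : znorm (a - a) = 0 := by
  simp [znorm]

/-- The graph whose edges are pairs of distinct points of `E` at sup-distance `≤ M`. -/
def graph (D : ℕ) (M : ℝ) (E : Set (Fin D → ℤ)) : SimpleGraph (Fin D → ℤ) where
  Adj a b := a ≠ b ∧ a ∈ E ∧ b ∈ E ∧ (znorm (b - a) : ℝ) ≤ M
  symm := ⟨by
    rintro a b ⟨h1, h2, h3, h4⟩
    exact ⟨h1.symm, h3, h2, by rwa [znorm_sub_comm]⟩⟩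
  loopless := ⟨fun a h => h.1 rfl⟩

lemma walk_bound {D : ℕ} {M : ℝ} {E : Set (Fin D → ℤ)} (hM : 0 ≤ M)
    {x y : Fin D → ℤ} (p : (graph D M E).Walk x y) :
    (znorm (x - y) : ℝ) ≤ M * p.length := by
  induction p with
  | nil => simp [znorm, Pi.zero_apply]
  | cons h q ih =>
    rename_i u v w
    have tri : (znorm (u - w) : ℝ) ≤ (znorm (u - v) : ℝ) + (znorm (v - w) : ℝ) := by
      have := znorm_add_le (u - v) (v - w)
      have h2 : u - w = (u - v) + (v - w) := by ring
      rw [h2]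
      exact_mod_cast this
    have hstep : (znorm (u - v) : ℝ) ≤ M := by
      rw [znorm_sub_comm]; exact h.2.2.2
    calc (znorm (u - w) : ℝ) ≤ (znorm (u - v) : ℝ) + (znorm (v - w) : ℝ) := tri
      _ ≤ M + M * q.length := add_le_add hstep ih
      _ = M * (q.length + 1) := by ring
      _ = M * ((SimpleGraph.Walk.cons h q).length) := by
          rw [SimpleGraph.Walk.length_cons]; push_cast; ring

lemma support_mem_E {D : ℕ} {M : ℝ} {E : Set (Fin D → ℤ)}
    {x y : Fin D → ℤ} (p : (graph D M E).Walk x y) (hx : x ∈ E) :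
    ∀ v ∈ p.support, v ∈ E := by
  induction p with
  | nil => simp only [SimpleGraph.Walk.support_nil, List.mem_singleton]; rintro v rfl; exact hx
  | cons h q ih =>
    intro v hv
    rw [SimpleGraph.Walk.support_cons, List.mem_cons] at hv
    rcases hv with rfl | hv
    · exact hx
    · exact ih h.2.2.1 v hv

/-- clustering of a set in which every M-chain has length at most 𝓛. -/
theorem clustering
    (D : ℕ) (hD : 1 ≤ D) (M 𝓛 : ℝ) (hM : 1 ≤ M) (h𝓛 : 1 ≤ 𝓛)
    (E : Set (Fin D → ℤ))
    (hchain : ∀ (L : ℕ) (x : Fin (L + 1) → (Fin D → ℤ)),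
      Function.Injective x → (∀ q, x q ∈ E) →
      (∀ q : Fin L, (znorm (x q.succ - x q.castSucc) : ℝ) ≤ M) →
      (L : ℝ) ≤ 𝓛) :
    ∃ P : Set (Set (Fin D → ℤ)),
      ⋃₀ P = E ∧
      (∀ Ω ∈ P, Ω.Nonempty) ∧
      (∀ Ω ∈ P, ∀ Ω' ∈ P, Ω ≠ Ω' → Disjoint Ω Ω') ∧
      (∀ Ω ∈ P, ∀ x ∈ Ω, ∀ y ∈ Ω, (znorm (x - y) : ℝ) ≤ M * 𝓛) ∧
      (∀ Ω ∈ P, ∀ Ω' ∈ P, Ω ≠ Ω' →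
        ∀ x ∈ Ω, ∀ y ∈ Ω', M < (znorm (x - y) : ℝ)) := by
  set G := graph D M E with hG
  have hM0 : (0:ℝ) ≤ M := le_trans zero_le_one hM
  -- key quantitative bound
  have key : ∀ x ∈ E, ∀ y, G.Reachable x y → (znorm (x - y) : ℝ) ≤ M * 𝓛 := by
    intro x hx y hr
    obtain ⟨p⟩ := hr
    set q : G.Walk x y := p.bypass with hq
    have hnd : q.support.Nodup := p.bypass_isPath.support_nodup
    set L := q.length with hL
    have hlen : q.support.length = L + 1 := q.length_support
    set z : Fin (L + 1) → (Fin D → ℤ) :=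
      fun i => q.support.get (Fin.cast hlen.symm i) with hz
    have hinj : Function.Injective z := by
      intro a b hab
      have := List.nodup_iff_injective_get.mp hnd hab
      exact Fin.cast_injective _ (by exact this)
    have hmem : ∀ i, z i ∈ E := fun i =>
      support_mem_E q hx _ (q.support.get_mem _)
    have hsteps : ∀ i : Fin L, (znorm (z i.succ - z i.castSucc) : ℝ) ≤ M := by
      intro i
      have hchain' := q.isChain_adj_support
      rw [List.isChain_iff_getElem] at hchain'
      have hi : (i : ℕ) < q.support.length - 1 := by
        rw [hlen]; simpa using i.isLt
      have hadj := hchain' i (by omega)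
      have e1 : q.support[(i:ℕ)] = z i.castSucc := rfl
      have e2 : q.support[(i:ℕ) + 1] = z i.succ := rfl
      rw [e1, e2] at hadj
      exact hadj.2.2.2
    have hL𝓛 : (L : ℝ) ≤ 𝓛 := hchain L z hinj hmem hsteps
    calc (znorm (x - y) : ℝ) ≤ M * L := walk_bound hM0 q
      _ ≤ M * 𝓛 := by exact mul_le_mul_of_nonneg_left hL𝓛 hM0
  -- classes
  refine ⟨{Ω | ∃ x, x ∈ E ∧ Ω = {y | y ∈ E ∧ G.Reachable x y}}, ?_, ?_, ?_, ?_, ?_⟩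
  · ext y
    constructor
    · rintro ⟨Ω, ⟨x, hx, rfl⟩, hy, _⟩
      exact hy
    · intro hy
      exact ⟨{z | z ∈ E ∧ G.Reachable y z}, ⟨y, hy, rfl⟩, hy, SimpleGraph.Reachable.refl y⟩
  · rintro Ω ⟨x, hx, rfl⟩
    exact ⟨x, hx, SimpleGraph.Reachable.refl x⟩
  · rintro Ω ⟨x, hx, rfl⟩ Ω' ⟨x', hx', rfl⟩ hne
    rw [Set.disjoint_left]
    rintro z ⟨hzE, hz⟩ ⟨_, hz'⟩
    apply hne
    ext w
    constructor
    · rintro ⟨hwE, hw⟩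
      exact ⟨hwE, (hz'.trans hz.symm).trans hw⟩
    · rintro ⟨hwE, hw⟩
      exact ⟨hwE, (hz.trans hz'.symm).trans hw⟩
  · rintro Ω ⟨x, hx, rfl⟩ a ⟨haE, ha⟩ b ⟨hbE, hb⟩
    exact key a haE b (ha.symm.trans hb)
  · rintro Ω ⟨x, hx, rfl⟩ Ω' ⟨x', hx', rfl⟩ hne a ⟨haE, ha⟩ b ⟨hbE, hb⟩
    by_contra hle
    push_neg at hle
    have hreach : G.Reachable a b := by
      rcases eq_or_ne a b with rfl | hab
      · exact SimpleGraph.Reachable.refl a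
      · exact SimpleGraph.Adj.reachable ⟨hab, haE, hbE, by rwa [znorm_sub_comm]⟩
    apply hne
    ext w
    constructor
    · rintro ⟨hwE, hw⟩
      exact ⟨hwE, ((hb.trans hreach.symm).trans ha.symm).trans hw⟩
    · rintro ⟨hwE, hw⟩
      exact ⟨hwE, ((ha.trans hreach).trans hb.symm).trans hw⟩

end Stmt13
end

section
/- Let n ≥ 1 and let A0, Y be Hermitian n × n complex matrices with ‖Y‖_op ≤ 1 (ℓ²-operator norm), and set A(θ) := A0 + θY for θ ∈ ℝ. Let τ > 0 and N ≥ 1 be real numbers. Define B := { θ ∈ ℝ : A(θ) has an eigenvalue of modulus less than N^{−τ} } and B2 := { θ ∈ ℝ : A(θ) has an eigenvalue of modulus less than 2N^{−τ} }. If the Lebesgue measure 𝕄 := |B2| is finite, then B is contained in a union of at most 2𝕄N^{τ} intervals, each of length at most N^{−τ}. -/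
open scoped BigOperators MeasureTheory ENNReal
open Matrix

namespace Stmt16

/-- ℓ²-operator norm of a square complex matrix -/
noncomputable def opN {n : ℕ} (M : Matrix (Fin n) (Fin n) ℂ) : ℝ :=
  ‖LinearMap.toContinuousLinearMap (Matrix.toEuclideanLin M)‖


lemma det_zero_of_eig {n : ℕ} (H : Matrix (Fin n) (Fin n) ℂ) (hH : H.IsHermitian) (i : Fin n) :
    (H - (hH.eigenvalues i : ℝ) • (1 : Matrix (Fin n) (Fin n) ℂ)).det = 0 := by
  rw [← Matrix.exists_mulVec_eq_zero_iff]
  refine ⟨⇑(hH.eigenvectorBasis i), ?_, ?_⟩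
  · have := (hH.eigenvectorBasis).toBasis.ne_zero i
    simpa using this
  · have h1 := hH.mulVec_eigenvectorBasis i
    rw [Matrix.sub_mulVec, h1]
    have : ((hH.eigenvalues i : ℝ) • (1 : Matrix (Fin n) (Fin n) ℂ)) *ᵥ ⇑(hH.eigenvectorBasis i)
        = hH.eigenvalues i • ⇑(hH.eigenvectorBasis i) := by
      rw [Matrix.smul_mulVec, Matrix.one_mulVec]
    rw [this, sub_self]

lemma dist_bound {n : ℕ} (hn : 1 ≤ n) (H' Y : Matrix (Fin n) (Fin n) ℂ)
    (hH' : H'.IsHermitian) (hYop : opN Y ≤ 1) (t μ : ℝ)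
    (v : Fin n → ℂ) (hv : v ≠ 0)
    (hHv : H'.mulVec v = (μ : ℂ) • v + (t : ℂ) • (Y.mulVec v)) :
    ∃ i : Fin n, |hH'.eigenvalues i - μ| ≤ |t| := by
  haveI : NeZero n := ⟨by omega⟩
  set b := hH'.eigenvectorBasis with hb
  set lam := hH'.eigenvalues with hlam
  set w : EuclideanSpace ℂ (Fin n) := (WithLp.equiv 2 (Fin n → ℂ)).symm v with hw
  obtain ⟨i, -, hi⟩ := Finset.exists_min_image Finset.univ (fun i => |lam i - μ|)
    ⟨⟨0, by omega⟩, Finset.mem_univ _⟩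
  refine ⟨i, ?_⟩
  set δ := |lam i - μ| with hδ
  set T := Matrix.toEuclideanLin H' with hT
  have hS : (Matrix.toEuclideanLin H').IsSymmetric := Matrix.isHermitian_iff_isSymmetric.1 hH'
  set c : Fin n → ℂ := fun j => b.repr w j with hc
  -- T (b j) = lam j • b j
  have hTb : ∀ j, T (b j) = (lam j : ℂ) • b j := by
    intro j
    have h1 := hH'.mulVec_eigenvectorBasis j
    have h0 : T (b j) = (WithLp.equiv 2 (Fin n → ℂ)).symm
        (H'.mulVec ((WithLp.equiv 2 (Fin n → ℂ)) (b j))) := Matrix.toEuclideanLin_apply H' (b j)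
    rw [h0]
    have h2 : (WithLp.equiv 2 (Fin n → ℂ)) (b j) = ⇑(b j) := rfl
    rw [h2, h1]
    ext k
    simp [Complex.real_smul]
    rfl
  -- repr of T w
  have hreprT : ∀ j, b.repr (T w) j = (lam j : ℂ) * c j := by
    intro j
    rw [b.repr_apply_apply, ← hS (b j) w, hTb j, inner_smul_left, Complex.conj_ofReal,
      ← b.repr_apply_apply]
  -- u := T w - μ • w
  set u : EuclideanSpace ℂ (Fin n) := T w - (μ : ℂ) • w with hu
  have hrepru : ∀ j, b.repr u j = ((lam j : ℂ) - μ) * c j := by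
    intro j
    rw [hu, map_sub, _root_.map_smul]
    simp only [PiLp.sub_apply, PiLp.smul_apply]
    rw [hreprT j, smul_eq_mul]
    ring
  -- lower bound: δ * ‖w‖ ≤ ‖u‖
  have hlow : δ * ‖w‖ ≤ ‖u‖ := by
    have h1 : ‖u‖ = Real.sqrt (∑ j, ‖((lam j : ℂ) - μ) * c j‖ ^ 2) := by
      rw [← b.repr.norm_map u, EuclideanSpace.norm_eq]
      congr 1
      apply Finset.sum_congr rfl
      intro j _
      rw [hrepru j]
    have h2 : ‖w‖ = Real.sqrt (∑ j, ‖c j‖ ^ 2) := by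
      rw [← b.repr.norm_map w, EuclideanSpace.norm_eq]
    rw [h1, h2, hδ, ← Real.sqrt_sq (abs_nonneg (lam i - μ)),
      ← Real.sqrt_mul (sq_nonneg |lam i - μ|)]
    apply Real.sqrt_le_sqrt
    rw [Finset.mul_sum]
    apply Finset.sum_le_sum
    intro j _
    rw [norm_mul, mul_pow]
    apply mul_le_mul_of_nonneg_right _ (sq_nonneg _)
    have : ‖((lam j : ℂ) - μ)‖ = |lam j - μ| := by
      rw [← Complex.ofReal_sub, Complex.norm_real, Real.norm_eq_abs]
    rw [this]
    have := hi j (Finset.mem_univ j)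
    exact pow_le_pow_left₀ (abs_nonneg _) this 2
  -- upper bound
  have hup : ‖u‖ ≤ |t| * ‖w‖ := by
    have hTw : T w = (μ : ℂ) • w + (t : ℂ) • (Matrix.toEuclideanLin Y w) := by
      apply (WithLp.equiv 2 (Fin n → ℂ)).injective
      change Matrix.toLin' H' ((WithLp.equiv 2 (Fin n → ℂ)) w) = _
      rw [Matrix.toLin'_apply]
      have : (WithLp.equiv 2 (Fin n → ℂ)) w = v := rfl
      rw [this, hHv]
      ext k
      simp only [Pi.add_apply, Pi.smul_apply, PiLp.add_apply, PiLp.smul_apply, smul_eq_mul]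
      rw [show (Matrix.toEuclideanLin Y) w = (WithLp.equiv 2 (Fin n → ℂ)).symm (Y.mulVec v)
        from rfl]
      rfl
    have hu2 : u = (t : ℂ) • (Matrix.toEuclideanLin Y w) := by
      rw [hu, hTw]; abel
    rw [hu2, norm_smul]
    have h3 : ‖(t : ℂ)‖ = |t| := by rw [Complex.norm_real, Real.norm_eq_abs]
    rw [h3]
    apply mul_le_mul_of_nonneg_left _ (abs_nonneg t)
    have h4 : ‖Matrix.toEuclideanLin Y w‖
        ≤ opN Y * ‖w‖ := by
      have := (LinearMap.toContinuousLinearMap (Matrix.toEuclideanLin Y)).le_opNorm w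
      simpa [opN] using this
    calc ‖Matrix.toEuclideanLin Y w‖ ≤ opN Y * ‖w‖ := h4
      _ ≤ 1 * ‖w‖ := by apply mul_le_mul_of_nonneg_right hYop (norm_nonneg w)
      _ = ‖w‖ := one_mul _
  have hwpos : 0 < ‖w‖ := by
    rw [norm_pos_iff]
    intro h
    apply hv
    have : v = (WithLp.equiv 2 (Fin n → ℂ)) w := rfl
    rw [this, h]
    rfl
  have := hlow.trans hup
  exact le_of_mul_le_mul_right (by linarith) hwpos

lemma herm_param {n : ℕ} (A0 Y : Matrix (Fin n) (Fin n) ℂ)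
    (hA0 : A0.IsHermitian) (hY : Y.IsHermitian) (θ : ℝ) :
    (A0 + θ • Y).IsHermitian := by
  apply hA0.add
  unfold Matrix.IsHermitian
  ext i j
  simp only [Matrix.conjTranspose_apply, Matrix.smul_apply, smul_eq_mul]
  rw [← hY.apply j i]
  simp [Matrix.conjTranspose_apply, Complex.real_smul, _root_.map_mul, Complex.conj_ofReal]

lemma perturb {n : ℕ} (hn : 1 ≤ n) (A0 Y : Matrix (Fin n) (Fin n) ℂ)
    (hA0 : A0.IsHermitian) (hY : Y.IsHermitian) (hYop : opN Y ≤ 1)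
    (θ θ' μ : ℝ)
    (hdet : (A0 + θ • Y - μ • (1 : Matrix (Fin n) (Fin n) ℂ)).det = 0) :
    ∃ μ' : ℝ, |μ' - μ| ≤ |θ' - θ| ∧
      (A0 + θ' • Y - μ' • (1 : Matrix (Fin n) (Fin n) ℂ)).det = 0 := by
  obtain ⟨v, hv0, hv⟩ := (Matrix.exists_mulVec_eq_zero_iff).2 hdet
  have hH' : (A0 + θ' • Y).IsHermitian := herm_param A0 Y hA0 hY θ'
  have hHv : (A0 + θ' • Y).mulVec v = (μ : ℂ) • v + ((θ' - θ : ℝ) : ℂ) • (Y.mulVec v) := by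
    have h1 : (A0 + θ • Y).mulVec v = (μ : ℂ) • v := by
      have := hv
      rw [Matrix.sub_mulVec] at this
      have h2 : (μ • (1 : Matrix (Fin n) (Fin n) ℂ)).mulVec v = (μ : ℂ) • v := by
        rw [Matrix.smul_mulVec, Matrix.one_mulVec]
        ext k
        simp [Complex.real_smul]
      rw [h2] at this
      linear_combination (norm := module) this
    have h3 : A0 + θ' • Y = (A0 + θ • Y) + (θ' - θ) • Y := by
      rw [sub_smul]; abel
    rw [h3, Matrix.add_mulVec, h1]
    congr 1
    rw [Matrix.smul_mulVec]
    ext k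
    simp [Complex.real_smul]
  obtain ⟨i, hi⟩ := dist_bound hn (A0 + θ' • Y) Y hH' hYop (θ' - θ) μ v hv0 hHv
  exact ⟨hH'.eigenvalues i, hi, det_zero_of_eig _ hH' i⟩

/-- Lemma 6.3: complexity estimate. A real number `μ` is an
eigenvalue of the Hermitian matrix `A(θ) = A0 + θY` iff `det(A(θ) − μ·Id) = 0`. -/
theorem complexity_estimate
    (n : ℕ) (hn : 1 ≤ n)
    (A0 Y : Matrix (Fin n) (Fin n) ℂ)
    (hA0 : A0.IsHermitian) (hY : Y.IsHermitian) (hYop : opN Y ≤ 1)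
    (τ : ℝ) (hτ : 0 < τ) (N : ℝ) (hN : 1 ≤ N)
    (B B2 : Set ℝ)
    (hB : B = {θ : ℝ | ∃ μ : ℝ, |μ| < N ^ (-τ) ∧
      (A0 + θ • Y - μ • (1 : Matrix (Fin n) (Fin n) ℂ)).det = 0})
    (hB2 : B2 = {θ : ℝ | ∃ μ : ℝ, |μ| < 2 * N ^ (-τ) ∧
      (A0 + θ • Y - μ • (1 : Matrix (Fin n) (Fin n) ℂ)).det = 0})
    (hfin : MeasureTheory.volume B2 < ⊤) :
    ∃ (K : ℕ) (a c : Fin K → ℝ),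
      (K : ℝ) ≤ 2 * (MeasureTheory.volume B2).toReal * N ^ τ ∧
      (∀ i, c i - a i ≤ N ^ (-τ)) ∧
      B ⊆ ⋃ i, Set.Icc (a i) (c i) := by
  have hN0 : (0:ℝ) < N := lt_of_lt_of_le one_pos hN
  set ε : ℝ := N ^ (-τ) with hε
  have hε0 : 0 < ε := Real.rpow_pos_of_pos hN0 _
  set M : ℝ := (MeasureTheory.volume B2).toReal with hM
  have hM0 : 0 ≤ M := ENNReal.toReal_nonneg
  -- neighborhood property
  have hnbhd : ∀ θ ∈ B, ∀ x : ℝ, |x - θ| ≤ ε → x ∈ B2 := by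
    intro θ hθ x hx
    rw [hB] at hθ
    obtain ⟨μ, hμ, hdet⟩ := hθ
    obtain ⟨μ', hμ', hdet'⟩ := perturb hn A0 Y hA0 hY hYop θ x μ hdet
    rw [hB2]
    refine ⟨μ', ?_, hdet'⟩
    calc |μ'| ≤ |μ' - μ| + |μ| := by
          have := abs_sub_abs_le_abs_sub μ' μ; linarith [abs_sub_abs_le_abs_sub μ' μ]
      _ ≤ ε + |μ| := by linarith [hμ'.trans hx]
      _ < 2 * ε := by linarith
  -- the set of relevant grid intervals
  set S : Set ℤ := {k : ℤ | ∃ θ ∈ B, θ ∈ Set.Icc ((k:ℝ) * ε) ((k+1 : ℤ) * ε)} with hS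
  have hIco : ∀ k ∈ S, Set.Ico ((k:ℝ) * ε) ((k+1 : ℤ) * ε) ⊆ B2 := by
    intro k hk x hx
    obtain ⟨θ, hθB, hθI⟩ := hk
    apply hnbhd θ hθB
    obtain ⟨h1, h2⟩ := hθI
    obtain ⟨h3, h4⟩ := hx
    have : ((k+1 : ℤ) : ℝ) = (k:ℝ) + 1 := by push_cast; ring
    rw [this] at h2 h4
    rw [abs_sub_le_iff]
    constructor <;> nlinarith
  -- cardinality bound for finite subsets
  have hcard : ∀ F : Finset ℤ, ↑F ⊆ S → (F.card : ℝ) * ε ≤ M := by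
    intro F hF
    have hdisj : (↑F : Set ℤ).PairwiseDisjoint
        (fun k : ℤ => Set.Ico ((k:ℝ) * ε) ((k+1 : ℤ) * ε)) := by
      intro k _ l _ hkl
      apply Set.disjoint_left.2
      intro x hxk hxl
      rcases lt_or_gt_of_ne hkl with h | h
      · have : ((k:ℝ) + 1) ≤ (l:ℝ) := by exact_mod_cast h
        obtain ⟨_, h2⟩ := hxk; obtain ⟨h3, _⟩ := hxl
        push_cast at h2 h3
        nlinarith
      · have : ((l:ℝ) + 1) ≤ (k:ℝ) := by exact_mod_cast h
        obtain ⟨h2, _⟩ := hxk; obtain ⟨_, h3⟩ := hxl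
        push_cast at h2 h3
        nlinarith
    have hmeas : MeasureTheory.volume (⋃ k ∈ F, Set.Ico ((k:ℝ) * ε) ((k+1 : ℤ) * ε))
        = ∑ k ∈ F, MeasureTheory.volume (Set.Ico ((k:ℝ) * ε) ((k+1 : ℤ) * ε)) :=
      MeasureTheory.measure_biUnion_finset hdisj (fun k _ => measurableSet_Ico)
    have hvol : ∀ k : ℤ, MeasureTheory.volume (Set.Ico ((k:ℝ) * ε) ((k+1 : ℤ) * ε))
        = ENNReal.ofReal ε := by
      intro k
      rw [Real.volume_Ico]
      congr 1
      push_cast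
      ring
    have hsub : (⋃ k ∈ F, Set.Ico ((k:ℝ) * ε) ((k+1 : ℤ) * ε)) ⊆ B2 := by
      apply Set.iUnion₂_subset
      intro k hk
      exact hIco k (hF hk)
    have hle : (F.card : ℝ≥0∞) * ENNReal.ofReal ε ≤ MeasureTheory.volume B2 := by
      calc (F.card : ℝ≥0∞) * ENNReal.ofReal ε
          = ∑ k ∈ F, MeasureTheory.volume (Set.Ico ((k:ℝ) * ε) ((k+1 : ℤ) * ε)) := by
            rw [Finset.sum_congr rfl (fun k _ => hvol k), Finset.sum_const, nsmul_eq_mul]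
        _ = MeasureTheory.volume (⋃ k ∈ F, Set.Ico ((k:ℝ) * ε) ((k+1 : ℤ) * ε)) := hmeas.symm
        _ ≤ MeasureTheory.volume B2 := MeasureTheory.measure_mono hsub
    have := ENNReal.toReal_mono hfin.ne hle
    rw [ENNReal.toReal_mul, ENNReal.toReal_natCast, ENNReal.toReal_ofReal hε0.le] at this
    exact this
  -- S is finite
  have hSfin : S.Finite := by
    by_contra hinf
    obtain ⟨F, hFS, hFcard⟩ :=
      Set.Infinite.exists_subset_card_eq hinf (Nat.floor (M / ε) + 1)
    have h1 := hcard F hFS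
    rw [hFcard] at h1
    have h2 : (Nat.floor (M / ε) + 1 : ℝ) ≤ M / ε := by
      rw [le_div_iff₀ hε0]
      push_cast at h1 ⊢
      linarith
    have h3 := Nat.lt_floor_add_one (M / ε)
    push_cast at h2 h3
    linarith
  -- build the cover
  set Ft : Finset ℤ := hSfin.toFinset with hFt
  set K : ℕ := Ft.card with hK
  have e : {x // x ∈ Ft} ≃ Fin K := Ft.equivFin
  refine ⟨K, fun i => ((e.symm i : ℤ) : ℝ) * ε, fun i => (((e.symm i : ℤ) + 1 : ℤ) : ℝ) * ε,
    ?_, ?_, ?_⟩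
  · -- cardinality bound
    have h1 : (K : ℝ) * ε ≤ M := hcard Ft (by rw [hFt]; exact fun k hk => hSfin.mem_toFinset.1 hk)
    have hεinv : ε⁻¹ = N ^ τ := by
      rw [hε, Real.rpow_neg hN0.le, inv_inv]
    have h2 : (K : ℝ) ≤ M * N ^ τ := by
      calc (K : ℝ) = ((K : ℝ) * ε) * ε⁻¹ := by field_simp
        _ ≤ M * ε⁻¹ := mul_le_mul_of_nonneg_right h1 (inv_nonneg.2 hε0.le)
        _ = M * N ^ τ := by rw [hεinv]
    have h3 : 0 ≤ M * N ^ τ := mul_nonneg hM0 (Real.rpow_pos_of_pos hN0 τ).le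
    linarith
  · intro i
    have h : (((e.symm i : ℤ) + 1 : ℤ) : ℝ) = ((e.symm i : ℤ) : ℝ) + 1 := by
      push_cast; ring
    simp only [h]
    nlinarith [hε0]
  · intro θ hθ
    set k : ℤ := Int.floor (θ / ε) with hk
    have hk1 : (k : ℝ) * ε ≤ θ := by
      rw [hk]
      have := Int.floor_le (θ / ε)
      calc ((Int.floor (θ/ε) : ℤ) : ℝ) * ε ≤ (θ / ε) * ε := by nlinarith
        _ = θ := by field_simp
    have hk2 : θ ≤ ((k + 1 : ℤ) : ℝ) * ε := by
      have := (Int.lt_floor_add_one (θ / ε)).le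
      push_cast
      calc θ = (θ / ε) * ε := by field_simp
        _ ≤ ((k:ℝ) + 1) * ε := by nlinarith
    have hkS : k ∈ S := ⟨θ, hθ, hk1, hk2⟩
    have hkFt : k ∈ Ft := hSfin.mem_toFinset.2 hkS
    rw [Set.mem_iUnion]
    refine ⟨e ⟨k, hkFt⟩, ?_⟩
    have hsymm : e.symm (e ⟨k, hkFt⟩) = ⟨k, hkFt⟩ := e.symm_apply_apply _
    simp only [hsymm]
    exact ⟨hk1, hk2⟩


end Stmt16
end

section
/- Let d, ν ≥ 1 be integers, ω̄ ∈ ℝ^ν, β0 > 0, γ > 0, N0 a positive integer and τ1 ≥ d + ν a real number. Let (μ_j)_{j ∈ ℤ^d, |j| ≤ N0} be real numbers with μ_j ≥ β0 for all j with |j| ≤ N0 (sup-norm on ℤ^d). Define Ḡ := { λ ∈ [1/2, 3/2] : |λ ω̄·l + μ_j| ≥ γ N0^{−τ1} and |−λ ω̄·l + μ_j| ≥ γ N0^{−τ1} for all l ∈ ℤ^ν with |l| ≤ N0 and all j ∈ ℤ^d with |j| ≤ N0 }. Then there is a constant C, depending only on d and ν, such that the Lebesgue measure of [1/2, 3/2]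 ∖ Ḡ is at most C γ β0^{−1} N0^{d+ν−τ1}, and in particular at most C γ β0^{−1}. -/
open scoped BigOperators MeasureTheory

namespace Stmt17

/-- sup-norm of an integer vector -/
def znorm {n : ℕ} (l : Fin n → ℤ) : ℕ := Finset.univ.sup fun t => (l t).natAbs

private lemma badset_measure (a m ε β0 : ℝ) (hβ : 0 < β0) (hε : 0 < ε) (hm : β0 ≤ m) :
    MeasureTheory.volume {l : ℝ | l ∈ Set.Icc (1/2:ℝ) (3/2) ∧ |l * a + m| < ε}
      ≤ ENNReal.ofReal (12*ε/β0) := by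
  by_cases hcase : 2*ε ≤ β0
  · rcases Set.eq_empty_or_nonempty {l : ℝ | l ∈ Set.Icc (1/2:ℝ) (3/2) ∧ |l * a + m| < ε}
      with he | ⟨l0, hl0⟩
    · rw [he]; simp
    · obtain ⟨⟨hl01, hl02⟩, hl0e⟩ := hl0
      have h1 : m - ε ≤ |l0 * a| := by
        have := abs_sub_abs_le_abs_sub m (l0 * a + m)
        rw [abs_of_pos (by linarith)] at this
        have h2 : |m - (l0*a+m)| = |l0*a| := by rw [abs_sub_comm]; ring_nf
        linarith [abs_nonneg (l0*a)]
      have h2 : |l0 * a| ≤ (3/2) * |a| := by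
        rw [abs_mul]
        have : |l0| ≤ 3/2 := abs_le.2 ⟨by linarith, hl02⟩
        nlinarith [abs_nonneg a]
      have ha : β0/3 ≤ |a| := by linarith
      calc MeasureTheory.volume {l : ℝ | l ∈ Set.Icc (1/2:ℝ) (3/2) ∧ |l * a + m| < ε}
          ≤ MeasureTheory.volume (Set.Icc (l0 - 6*ε/β0) (l0 + 6*ε/β0)) := by
            apply MeasureTheory.measure_mono
            rintro l ⟨_, hle⟩
            have hd : |l - l0| * |a| < 2 * ε := by
              rw [← abs_mul]
              have : (l - l0) * a = (l*a+m) - (l0*a+m) := by ring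
              rw [this]
              calc |(l*a+m) - (l0*a+m)| ≤ |l*a+m| + |l0*a+m| := abs_sub _ _
                _ < 2*ε := by linarith
            have : |l - l0| ≤ 6*ε/β0 := by
              rw [le_div_iff₀ hβ]
              nlinarith [abs_nonneg (l - l0)]
            have := abs_le.1 this
            exact ⟨by linarith [this.1], by linarith [this.2]⟩
        _ = ENNReal.ofReal (12*ε/β0) := by
            rw [Real.volume_Icc]; ring_nf
  · calc MeasureTheory.volume {l : ℝ | l ∈ Set.Icc (1/2:ℝ) (3/2) ∧ |l * a + m| < ε}
        ≤ MeasureTheory.volume (Set.Icc (1/2:ℝ) (3/2)) :=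
          MeasureTheory.measure_mono fun l hl => hl.1
      _ = ENNReal.ofReal 1 := by rw [Real.volume_Icc]; norm_num
      _ ≤ ENNReal.ofReal (12*ε/β0) := by
          apply ENNReal.ofReal_le_ofReal
          rw [le_div_iff₀ hβ]; nlinarith

private lemma znorm_mem_Icc {n N0 : ℕ} (p : Fin n → ℤ) :
    znorm p ≤ N0 ↔ p ∈ Finset.Icc (fun _ => -(N0:ℤ)) (fun _ => (N0:ℤ)) := by
  rw [Finset.mem_Icc, Pi.le_def, Pi.le_def, znorm, Finset.sup_le_iff]
  constructor
  · intro h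
    exact ⟨fun t => by have := h t (Finset.mem_univ t); omega,
           fun t => by have := h t (Finset.mem_univ t); omega⟩
  · rintro ⟨h1, h2⟩ t _
    have := h1 t; have := h2 t; omega

private lemma card_pi_Icc (n N0 : ℕ) :
    (Finset.Icc (fun _ => -(N0:ℤ)) (fun _ => (N0:ℤ)) : Finset (Fin n → ℤ)).card
      = (2*N0+1)^n := by
  have h : (Finset.Icc (-(N0:ℤ)) (N0:ℤ)).card = 2*N0+1 := by rw [Int.card_Icc]; omega
  rw [Pi.card_Icc]
  simp [h]

/-- Lemma 7.10: the set of non-resonant dilation parameters λ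
has complement of measure O(γ). -/
theorem nonresonant_parameters_measure
    (d ν : ℕ) (hd : 1 ≤ d) (hν : 1 ≤ ν) :
    ∃ C : ℝ, 0 < C ∧
      ∀ (ω : Fin ν → ℝ) (β0 γ : ℝ), 0 < β0 → 0 < γ →
        ∀ (N0 : ℕ), 1 ≤ N0 → ∀ τ1 : ℝ, (d : ℝ) + (ν : ℝ) ≤ τ1 →
          ∀ μ : (Fin d → ℤ) → ℝ,
            (∀ j : Fin d → ℤ, znorm j ≤ N0 → β0 ≤ μ j) →
            MeasureTheory.volume
                (Set.Icc (1 / 2 : ℝ) (3 / 2) \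
                  {l : ℝ | l ∈ Set.Icc (1 / 2 : ℝ) (3 / 2) ∧
                    ∀ (p : Fin ν → ℤ) (j : Fin d → ℤ),
                      znorm p ≤ N0 → znorm j ≤ N0 →
                      γ * (N0 : ℝ) ^ (-τ1) ≤ |l * (∑ t, ω t * (p t : ℝ)) + μ j| ∧
                      γ * (N0 : ℝ) ^ (-τ1) ≤ |-(l * (∑ t, ω t * (p t : ℝ))) + μ j|})
              ≤ ENNReal.ofReal (C * γ * β0⁻¹ * (N0 : ℝ) ^ ((d : ℝ) + (ν : ℝ) - τ1)) ∧
            MeasureTheory.volume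
                (Set.Icc (1 / 2 : ℝ) (3 / 2) \
                  {l : ℝ | l ∈ Set.Icc (1 / 2 : ℝ) (3 / 2) ∧
                    ∀ (p : Fin ν → ℤ) (j : Fin d → ℤ),
                      znorm p ≤ N0 → znorm j ≤ N0 →
                      γ * (N0 : ℝ) ^ (-τ1) ≤ |l * (∑ t, ω t * (p t : ℝ)) + μ j| ∧
                      γ * (N0 : ℝ) ^ (-τ1) ≤ |-(l * (∑ t, ω t * (p t : ℝ))) + μ j|})
              ≤ ENNReal.ofReal (C * γ * β0⁻¹) := by
  refine ⟨24 * 3^(d+ν), by positivity, ?_⟩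
  intro ω β0 γ hβ hγ N0 hN0 τ1 hτ μ hμ
  set C : ℝ := 24 * 3^(d+ν) with hC
  set ε : ℝ := γ * (N0 : ℝ) ^ (-τ1) with hεdef
  have hN0R : (1:ℝ) ≤ (N0:ℝ) := by exact_mod_cast hN0
  have hε : 0 < ε := by
    have : (0:ℝ) < (N0:ℝ) ^ (-τ1) := Real.rpow_pos_of_pos (by linarith) _
    exact mul_pos hγ this
  set a : (Fin ν → ℤ) → ℝ := fun p => ∑ t, ω t * (p t : ℝ) with ha
  set P : Finset (Fin ν → ℤ) := Finset.Icc (fun _ => -(N0:ℤ)) (fun _ => (N0:ℤ)) with hP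
  set J : Finset (Fin d → ℤ) := Finset.Icc (fun _ => -(N0:ℤ)) (fun _ => (N0:ℤ)) with hJ
  set Bad : (Fin ν → ℤ) → (Fin d → ℤ) → Set ℝ := fun p j =>
    {l : ℝ | l ∈ Set.Icc (1/2:ℝ) (3/2) ∧ |l * a p + μ j| < ε} ∪
    {l : ℝ | l ∈ Set.Icc (1/2:ℝ) (3/2) ∧ |l * (-(a p)) + μ j| < ε} with hBad
  -- subset into union of bad sets
  have hsub : (Set.Icc (1 / 2 : ℝ) (3 / 2) \
      {l : ℝ | l ∈ Set.Icc (1 / 2 : ℝ) (3 / 2) ∧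
        ∀ (p : Fin ν → ℤ) (j : Fin d → ℤ),
          znorm p ≤ N0 → znorm j ≤ N0 →
          ε ≤ |l * a p + μ j| ∧ ε ≤ |-(l * a p) + μ j|})
      ⊆ ⋃ p ∈ P, ⋃ j ∈ J, Bad p j := by
    rintro l ⟨hlI, hlG⟩
    simp only [Set.mem_setOf_eq, not_and] at hlG
    have := hlG hlI
    push_neg at this
    obtain ⟨p, j, h1, h2, h3⟩ := this
    refine Set.mem_biUnion ((znorm_mem_Icc p).mp h1) (Set.mem_biUnion ((znorm_mem_Icc j).mp h2) ?_)
    by_cases hc : ε ≤ |l * a p + μ j|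
    · right
      refine ⟨hlI, ?_⟩
      have := h3 hc
      have heq : -(l * a p) = l * (-(a p)) := by ring
      rwa [heq] at this
    · left
      exact ⟨hlI, lt_of_not_ge hc⟩
  -- measure bound for each Bad set
  have hbad : ∀ p ∈ P, ∀ j ∈ J, MeasureTheory.volume (Bad p j) ≤ ENNReal.ofReal (24*ε/β0) := by
    intro p _ j hj
    have hμj : β0 ≤ μ j := hμ j ((znorm_mem_Icc j).mpr hj)
    calc MeasureTheory.volume (Bad p j)
        ≤ MeasureTheory.volume {l : ℝ | l ∈ Set.Icc (1/2:ℝ) (3/2) ∧ |l * a p + μ j| < ε}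
          + MeasureTheory.volume {l : ℝ | l ∈ Set.Icc (1/2:ℝ) (3/2) ∧ |l * (-(a p)) + μ j| < ε} :=
          MeasureTheory.measure_union_le _ _
      _ ≤ ENNReal.ofReal (12*ε/β0) + ENNReal.ofReal (12*ε/β0) := by
          gcongr
          · exact badset_measure (a p) (μ j) ε β0 hβ hε hμj
          · exact badset_measure (-(a p)) (μ j) ε β0 hβ hε hμj
      _ = ENNReal.ofReal (24*ε/β0) := by
          rw [← ENNReal.ofReal_add (by positivity) (by positivity)]
          ring_nf
  -- counting
  have hcards : (P.card : ℝ) = ((2*N0+1 : ℕ):ℝ)^ν := by rw [hP, card_pi_Icc]; push_cast; ring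
  have hcardsJ : (J.card : ℝ) = ((2*N0+1 : ℕ):ℝ)^d := by rw [hJ, card_pi_Icc]; push_cast; ring
  -- the key real inequality
  have hkey : (P.card : ℝ) * (J.card : ℝ) * (24*ε/β0)
      ≤ C * γ * β0⁻¹ * (N0 : ℝ) ^ ((d : ℝ) + (ν : ℝ) - τ1) := by
    have h3 : ((2*N0+1:ℕ):ℝ) ≤ 3*(N0:ℝ) := by push_cast; linarith
    have hrw : (N0:ℝ) ^ ((d : ℝ) + (ν : ℝ) - τ1) = (N0:ℝ)^(d+ν) * (N0:ℝ)^(-τ1) := by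
      rw [sub_eq_add_neg, Real.rpow_add (by linarith)]
      congr 1
      rw [← Real.rpow_natCast (N0:ℝ) (d+ν)]
      congr 1
      push_cast; ring
    rw [hcards, hcardsJ, hrw]
    have hstep : ((2*N0+1:ℕ):ℝ)^ν * ((2*N0+1:ℕ):ℝ)^d ≤ (3*(N0:ℝ))^ν * (3*(N0:ℝ))^d := by
      gcongr <;> positivity
    have hεβ : 0 ≤ 24*ε/β0 := by positivity
    calc ((2*N0+1:ℕ):ℝ)^ν * ((2*N0+1:ℕ):ℝ)^d * (24*ε/β0)
        ≤ (3*(N0:ℝ))^ν * (3*(N0:ℝ))^d * (24*ε/β0) := by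
          exact mul_le_mul_of_nonneg_right hstep hεβ
      _ = C * γ * β0⁻¹ * ((N0:ℝ)^(d+ν) * (N0:ℝ)^(-τ1)) := by
          rw [hC, hεdef, mul_pow, mul_pow, pow_add, pow_add]
          field_simp
  -- conclude the first bound
  have hmain : MeasureTheory.volume
      (Set.Icc (1 / 2 : ℝ) (3 / 2) \
        {l : ℝ | l ∈ Set.Icc (1 / 2 : ℝ) (3 / 2) ∧
          ∀ (p : Fin ν → ℤ) (j : Fin d → ℤ),
            znorm p ≤ N0 → znorm j ≤ N0 →
            ε ≤ |l * (∑ t, ω t * (p t : ℝ)) + μ j| ∧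
            ε ≤ |-(l * (∑ t, ω t * (p t : ℝ))) + μ j|})
      ≤ ENNReal.ofReal (C * γ * β0⁻¹ * (N0 : ℝ) ^ ((d : ℝ) + (ν : ℝ) - τ1)) := by
    refine le_trans (MeasureTheory.measure_mono hsub) ?_
    calc MeasureTheory.volume (⋃ p ∈ P, ⋃ j ∈ J, Bad p j)
        ≤ ∑ p ∈ P, MeasureTheory.volume (⋃ j ∈ J, Bad p j) :=
          MeasureTheory.measure_biUnion_finset_le _ _
      _ ≤ ∑ p ∈ P, ∑ j ∈ J, MeasureTheory.volume (Bad p j) :=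
          Finset.sum_le_sum fun p _ => MeasureTheory.measure_biUnion_finset_le _ _
      _ ≤ ∑ p ∈ P, ∑ j ∈ J, ENNReal.ofReal (24*ε/β0) :=
          Finset.sum_le_sum fun p hp => Finset.sum_le_sum fun j hj => hbad p hp j hj
      _ = (P.card : ENNReal) * ((J.card : ENNReal) * ENNReal.ofReal (24*ε/β0)) := by
          simp [Finset.sum_const, nsmul_eq_mul, mul_assoc]
      _ = ENNReal.ofReal ((P.card : ℝ) * ((J.card : ℝ) * (24*ε/β0))) := by
          rw [ENNReal.ofReal_mul (by positivity), ENNReal.ofReal_mul (by positivity),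
            ENNReal.ofReal_natCast, ENNReal.ofReal_natCast]
      _ ≤ ENNReal.ofReal (C * γ * β0⁻¹ * (N0 : ℝ) ^ ((d : ℝ) + (ν : ℝ) - τ1)) :=
          ENNReal.ofReal_le_ofReal (by rw [← mul_assoc]; exact hkey)
  refine ⟨hmain, le_trans hmain (ENNReal.ofReal_le_ofReal ?_)⟩
  have hle1 : (N0 : ℝ) ^ ((d : ℝ) + (ν : ℝ) - τ1) ≤ 1 :=
    Real.rpow_le_one_of_one_le_of_nonpos hN0R (by linarith)
  have : 0 ≤ C * γ * β0⁻¹ := by positivity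
  nlinarith
end Stmt17
end
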